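/- Let Y be a RF on a complete probability space such that ‖Y(0)‖ > 1 almost surely, S(Y) > 0 almost surely, and for every product-measurable Γ : D → [0, ∞], every h ∈ T and every x > 0, E[Γ(x B^h Y) 1{x ‖Y(−h)‖ > 1}] = x^α E[Γ(Y) 1{‖Y(h)‖ > x}]. Then ‖Y(0)‖ is an α-Pareto random variable, ‖Y(0)‖ is independent of the RF Θ = Y/‖Y(0)‖, and Θ is a spectral tail RF. -/

import Mathlib

/-!
Write `Θ = Y / ‖Y(0)‖`. For a `0`-homogeneous `Γ(f) = 1{f / ‖f(0)‖ ∈ C}`, the tail identity at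
`h = 0`, `x = s ≥ 1` reads `P(Θ ∈ C) = s^α P(Θ ∈ C, ‖Y(0)‖ > s)`, since `‖Y(0)‖ > 1` a.s.;
with `C` the whole path space this is the Pareto law, and then it says that the π-system
`{‖Y(0)‖ > s}` is independent of `σ(Θ)`.

For the spectral tail property apply the tail identity to the `(-α)`-homogeneous functional
`Γ(f) ‖f(0)‖^{-α}` and integrate in `x` against `α x⁻¹ dx`: the indicators `1{x ‖Y(-h)‖ > 1}`
and `1{‖Y(h)‖ > x}` integrate to `‖Y(-h)‖^α` and `‖Y(h)‖^α`, so
`E[Γ(B^h Y) 1{Y(-h) ≠ 0}] = E[Γ(Y) ‖Y(0)‖^{-α} ‖Y(h)‖^α]`, which is property (iii) for `Θ`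
because `Γ` is `0`-homogeneous.
-/

open MeasureTheory ProbabilityTheory Filter
open scoped ENNReal Topology

noncomputable section

abbrev Tsp (l : ℕ) : Type := EuclideanSpace ℝ (Fin l)
abbrev Vsp (d : ℕ) : Type := EuclideanSpace ℝ (Fin d)
abbrev RPath (l d : ℕ) : Type := Tsp l → Vsp d

/-- The shift `B^h f = f(· − h)`. -/
def shift {l d : ℕ} (h : Tsp l) (f : RPath l d) : RPath l d := fun t => f (t - h)

/-- Joint measurability of a random field. -/
def JointlyMeasurable {Ω : Type*} [MeasurableSpace Ω] {l d : ℕ} (Z : Ω → RPath l d) : Prop :=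
  Measurable fun p : Ω × Tsp l => Z p.1 p.2

/-- `F ∈ H_β`: product-measurable and `β`-homogeneous maps on path space. -/
def Hom (l d : ℕ) (β : ℝ) (F : RPath l d → ℝ≥0∞) : Prop :=
  Measurable F ∧
  ∀ c : ℝ, 0 < c → ∀ f : RPath l d,
    F (fun t => c • f t) = ENNReal.ofReal (c ^ β) * F f

/-- Condition (★). -/
def StarC {Ω : Type*} [MeasurableSpace Ω] (P : Measure Ω) {l d : ℕ} (α : ℝ)
    (Z : Ω → RPath l d) : Prop :=
  JointlyMeasurable Z ∧
  (∫⁻ ω, ENNReal.ofReal (‖Z ω 0‖ ^ α) ∂P) = 1 ∧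
  ∃ T₀ : Set (Tsp l), T₀.Countable ∧ P {ω | ∃ t ∈ T₀, 0 < ‖Z ω t‖} = 1

/-- `Z̃ ∈ C[Z]`. -/
def MemC {Ω Ω' : Type*} [MeasurableSpace Ω] [MeasurableSpace Ω']
    (P : Measure Ω) (P' : Measure Ω') {l d : ℕ} (α : ℝ)
    (Z : Ω → RPath l d) (ZT : Ω' → RPath l d) : Prop :=
  StarC P' α ZT ∧
  ∀ F : RPath l d → ℝ≥0∞, Hom l d α F → ∀ h : Tsp l,
    (∫⁻ ω, F (Z ω) ∂P) = ∫⁻ ω', F (shift h (ZT ω')) ∂P'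

/-- `S_γ(f) = ∫ ‖f(t)‖^α γ(t) dt`. -/
def Sgam {l d : ℕ} (α : ℝ) (γ : Tsp l → ℝ) (f : RPath l d) : ℝ≥0∞ :=
  ∫⁻ t, ENNReal.ofReal (‖f t‖ ^ α * γ t)

/-- `S(f) = ∫ ‖f(t)‖^α dt`. -/
def Sfun {l d : ℕ} (α : ℝ) (f : RPath l d) : ℝ≥0∞ :=
  ∫⁻ t, ENNReal.ofReal (‖f t‖ ^ α)

/-- The local random field `Z̃/‖Z̃(0)‖` (set to `0` where `‖Z̃(0)‖ = 0`). -/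
def localRF {Ω : Type*} {l d : ℕ} (ZT : Ω → RPath l d) (ω : Ω) : RPath l d :=
  fun t => if ‖ZT ω 0‖ = 0 then 0 else ‖ZT ω 0‖⁻¹ • ZT ω t

/-- The tilted measure `P̂`. -/
def tilted {Ω : Type*} [MeasurableSpace Ω] (P : Measure Ω) {l d : ℕ} (α : ℝ)
    (ZT : Ω → RPath l d) : Measure Ω :=
  P.withDensity fun ω => ENNReal.ofReal (‖ZT ω 0‖ ^ α)

/-- A spectral tail random field. -/
def SpectralTail {Ω : Type*} [MeasurableSpace Ω] (P : Measure Ω) {l d : ℕ} (α : ℝ)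
    (Θ : Ω → RPath l d) : Prop :=
  JointlyMeasurable Θ ∧
  P {ω | ‖Θ ω 0‖ = 1} = 1 ∧
  P {ω | 0 < Sfun α (Θ ω)} = 1 ∧
  ∀ Γ : RPath l d → ℝ≥0∞, Hom l d 0 Γ → ∀ h : Tsp l,
    (∫⁻ ω, ENNReal.ofReal (‖Θ ω h‖ ^ α) * Γ (Θ ω) ∂P) =
    ∫⁻ ω, (if ‖Θ ω (-h)‖ ≠ 0 then 1 else 0) * Γ (shift h (Θ ω)) ∂P

open Set

lemma lintegral_rpow_neg_sub_one_mul_ite_one_lt_mul {α : ℝ} (hα : 0 < α) {r : ℝ} (hr : 0 ≤ r) :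
    ∫⁻ x in Ioi (0 : ℝ), ENNReal.ofReal (α * x ^ (-α - 1)) * (if 1 < x * r then 1 else 0)
      = ENNReal.ofReal (r ^ α) := by
  rcases hr.eq_or_lt with rfl | hr
  · norm_num [Real.zero_rpow hα.ne']
  have hr' : 0 < 1 / r := by positivity
  have hind : ∀ x : ℝ, ENNReal.ofReal (α * x ^ (-α - 1)) * (if 1 < x * r then 1 else 0)
      = (Ioi (1 / r)).indicator (fun x => ENNReal.ofReal (α * x ^ (-α - 1))) x := by
    intro x
    simp only [indicator, mem_Ioi, div_lt_iff₀ hr, mul_ite, mul_one, mul_zero]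
  have hint : IntegrableOn (fun x => α * x ^ (-α - 1)) (Ioi (1 / r)) :=
    (integrableOn_Ioi_rpow_of_lt (by linarith) hr').const_mul α
  simp_rw [hind]
  rw [lintegral_indicator measurableSet_Ioi, Measure.restrict_restrict measurableSet_Ioi,
    inter_eq_self_of_subset_left (Ioi_subset_Ioi hr'.le),
    ← ofReal_integral_eq_lintegral_ofReal hint
      ((ae_restrict_mem measurableSet_Ioi).mono fun x hx => by
        have : 0 < x := hr'.trans hx
        positivity),
    integral_const_mul, integral_Ioi_rpow_of_lt (by linarith) hr', sub_add_cancel,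
    one_div, Real.inv_rpow hr.le, Real.rpow_neg hr.le, inv_inv]
  congr 1
  field_simp

lemma lintegral_rpow_sub_one_mul_ite_lt {α : ℝ} (hα : 0 < α) {s : ℝ} (hs : 0 ≤ s) :
    ∫⁻ x in Ioi (0 : ℝ), ENNReal.ofReal (α * x ^ (α - 1)) * (if x < s then 1 else 0)
      = ENNReal.ofReal (s ^ α) := by
  have hind : ∀ x : ℝ, ENNReal.ofReal (α * x ^ (α - 1)) * (if x < s then 1 else 0)
      = (Iio s).indicator (fun x => ENNReal.ofReal (α * x ^ (α - 1))) x := by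
    intro x
    simp only [indicator, mem_Iio, mul_ite, mul_one, mul_zero]
  have hint : IntegrableOn (fun x => α * x ^ (α - 1)) (Ioc 0 s) :=
    (intervalIntegral.intervalIntegrable_rpow' (by linarith)).1.const_mul α
  simp_rw [hind]
  rw [lintegral_indicator measurableSet_Iio, Measure.restrict_restrict measurableSet_Iio,
    Iio_inter_Ioi, Measure.restrict_congr_set Ioo_ae_eq_Ioc,
    ← ofReal_integral_eq_lintegral_ofReal hint
      ((ae_restrict_mem measurableSet_Ioc).mono fun x hx => by
        have : 0 < x := hx.1
        positivity),
    integral_const_mul, ← intervalIntegral.integral_of_le hs,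
    integral_rpow (Or.inl (by linarith)), sub_add_cancel, Real.zero_rpow hα.ne', sub_zero]
  congr 1
  field_simp

lemma ofReal_rpow_neg_mul_ofReal_rpow {r : ℝ} (hr : 0 ≤ r) {α : ℝ} (hα : α ≠ 0) :
    ENNReal.ofReal (r ^ (-α)) * ENNReal.ofReal (r ^ α) = if r ≠ 0 then 1 else 0 := by
  rcases hr.eq_or_lt with rfl | hr
  · simp [Real.zero_rpow hα]
  rw [← ENNReal.ofReal_mul (Real.rpow_nonneg hr.le _), ← Real.rpow_add hr, neg_add_cancel,
    Real.rpow_zero, ENNReal.ofReal_one, if_pos hr.ne']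

lemma lintegral_mul_lintegral_mul_comm {X W : Type*} [MeasurableSpace X] [MeasurableSpace W]
    {μ : Measure X} {ν : Measure W} [SFinite μ] [SFinite ν] {w : X → ℝ≥0∞} {F : W → ℝ≥0∞}
    {g : X → W → ℝ≥0∞} (hw : Measurable w) (hF : Measurable F)
    (hg : Measurable (Function.uncurry g)) :
    ∫⁻ x, w x * ∫⁻ y, F y * g x y ∂ν ∂μ = ∫⁻ y, F y * ∫⁻ x, w x * g x y ∂μ ∂ν := by
  have hprod : Measurable fun p : X × W => w p.1 * (F p.2 * g p.1 p.2) :=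
    (hw.comp measurable_fst).mul ((hF.comp measurable_snd).mul hg)
  calc ∫⁻ x, w x * ∫⁻ y, F y * g x y ∂ν ∂μ = ∫⁻ x, ∫⁻ y, w x * (F y * g x y) ∂ν ∂μ := by
        refine lintegral_congr fun x => (lintegral_const_mul _ ?_).symm
        exact hF.mul (hg.comp measurable_prodMk_left)
    _ = ∫⁻ y, ∫⁻ x, w x * (F y * g x y) ∂μ ∂ν := lintegral_lintegral_swap hprod.aemeasurable
    _ = ∫⁻ y, F y * ∫⁻ x, w x * g x y ∂μ ∂ν := by
        refine lintegral_congr fun y => ?_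
        have hy : Measurable fun x => w x * g x y := hw.mul (hg.comp measurable_prodMk_right)
        rw [← lintegral_const_mul (F y) hy]
        exact lintegral_congr fun x => by ring

lemma lintegral_mul_rpow_eq_of_balance {Ω : Type*} [MeasurableSpace Ω] {μ : Measure Ω}
    [SFinite μ] {α : ℝ} (hα : 0 < α) {F G : Ω → ℝ≥0∞} {U V : Ω → ℝ} (hF : Measurable F)
    (hG : Measurable G) (hU : Measurable U) (hV : Measurable V) (hU0 : ∀ ω, 0 ≤ U ω)
    (hV0 : ∀ ω, 0 ≤ V ω)
    (hbal : ∀ x : ℝ, 0 < x →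
      ENNReal.ofReal (x ^ (-α)) * ∫⁻ ω, F ω * (if 1 < x * U ω then 1 else 0) ∂μ =
        ENNReal.ofReal (x ^ α) * ∫⁻ ω, G ω * (if x < V ω then 1 else 0) ∂μ) :
    ∫⁻ ω, F ω * ENNReal.ofReal (U ω ^ α) ∂μ = ∫⁻ ω, G ω * ENNReal.ofReal (V ω ^ α) ∂μ := by
  have hw : ∀ γ : ℝ, Measurable fun x : ℝ => ENNReal.ofReal (α * x ^ γ) := fun γ => by fun_prop
  have hgU : Measurable (Function.uncurry fun (x : ℝ) ω =>
      if 1 < x * U ω then (1 : ℝ≥0∞) else 0) :=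
    Measurable.ite (measurableSet_lt measurable_const (measurable_fst.mul (hU.comp measurable_snd)))
      measurable_const measurable_const
  have hgV : Measurable (Function.uncurry fun (x : ℝ) ω =>
      if x < V ω then (1 : ℝ≥0∞) else 0) :=
    Measurable.ite (measurableSet_lt measurable_fst (hV.comp measurable_snd))
      measurable_const measurable_const
  calc ∫⁻ ω, F ω * ENNReal.ofReal (U ω ^ α) ∂μ
      = ∫⁻ ω, F ω * (∫⁻ x in Ioi (0 : ℝ), ENNReal.ofReal (α * x ^ (-α - 1)) *
          (if 1 < x * U ω then 1 else 0)) ∂μ := by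
        simp_rw [lintegral_rpow_neg_sub_one_mul_ite_one_lt_mul hα (hU0 _)]
    _ = ∫⁻ x in Ioi (0 : ℝ), ENNReal.ofReal (α * x ^ (-α - 1)) *
          ∫⁻ ω, F ω * (if 1 < x * U ω then 1 else 0) ∂μ :=
        (lintegral_mul_lintegral_mul_comm (hw _) hF hgU).symm
    _ = ∫⁻ x in Ioi (0 : ℝ), ENNReal.ofReal (α * x ^ (α - 1)) *
          ∫⁻ ω, G ω * (if x < V ω then 1 else 0) ∂μ := by
        refine setLIntegral_congr_fun measurableSet_Ioi fun x (hx : 0 < x) => ?_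
        have hsplit : ∀ γ : ℝ, ENNReal.ofReal (α * x ^ (γ - 1)) =
            ENNReal.ofReal (α * x⁻¹) * ENNReal.ofReal (x ^ γ) := fun γ => by
          rw [← ENNReal.ofReal_mul (by positivity), sub_eq_add_neg, Real.rpow_add hx,
            Real.rpow_neg_one]
          ring_nf
        rw [hsplit, hsplit, mul_assoc, mul_assoc, hbal x hx]
    _ = ∫⁻ ω, G ω * ENNReal.ofReal (V ω ^ α) ∂μ := by
        rw [lintegral_mul_lintegral_mul_comm (hw _) hG hgV]
        simp_rw [lintegral_rpow_sub_one_mul_ite_lt hα (hV0 _)]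

lemma lintegral_ite_one_zero {Ω : Type*} [MeasurableSpace Ω] {μ : Measure Ω} {q : Ω → Prop}
    [DecidablePred q] (hq : MeasurableSet {ω | q ω}) :
    ∫⁻ ω, (if q ω then 1 else 0) ∂μ = μ {ω | q ω} := by
  rw [← lintegral_indicator_one hq]
  simp only [indicator, mem_ofPred_eq, Pi.one_apply]

lemma measure_eq_one_of_ae_imp {Ω : Type*} [MeasurableSpace Ω] {P : Measure Ω}
    [IsProbabilityMeasure P] {A B : Set Ω} (hA : P A = 1) (hAB : ∀ᵐ ω ∂P, ω ∈ A → ω ∈ B) :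
    P B = 1 :=
  le_antisymm prob_le_one (hA ▸ measure_mono_ae hAB)

lemma indepFun_of_measure_preimage_Ioi_inter {Ω β : Type*} [MeasurableSpace Ω]
    [MeasurableSpace β] {P : Measure Ω} [IsProbabilityMeasure P] {X : Ω → ℝ} {Z : Ω → β}
    (hX : Measurable X) (hZ : Measurable Z)
    (h : ∀ s : ℝ, ∀ C : Set β, MeasurableSet C →
      P (X ⁻¹' Ioi s ∩ Z ⁻¹' C) = P (X ⁻¹' Ioi s) * P (Z ⁻¹' C)) :
    IndepFun X Z P := by
  rw [IndepFun_iff_Indep]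
  refine IndepSets.indep hX.comap_le hZ.comap_le (isPiSystem_Ioi.comap X)
    (@MeasurableSpace.isPiSystem_measurableSet Ω (.comap Z inferInstance)) ?_
    (@MeasurableSpace.generateFrom_measurableSet Ω (.comap Z inferInstance)).symm ?_
  · rw [BorelSpace.measurable_eq (α := ℝ), borel_eq_generateFrom_Ioi,
      MeasurableSpace.comap_generateFrom]
    rfl
  · rw [IndepSets_iff]
    rintro - - ⟨-, ⟨s, rfl⟩, rfl⟩ ⟨C, hC, rfl⟩
    exact h s C hC

section Paths

variable {l d : ℕ}

lemma shift_zero (f : RPath l d) : shift 0 f = f := by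
  funext t
  simp [shift]

lemma shift_apply_zero (h : Tsp l) (f : RPath l d) : shift h f 0 = f (-h) := by
  simp [shift]

lemma measurable_shift (h : Tsp l) : Measurable (shift (d := d) h) :=
  measurable_pi_iff.2 fun t => measurable_pi_apply (t - h)

def normalizePath (f : RPath l d) : RPath l d := fun t => ‖f 0‖⁻¹ • f t

lemma measurable_normalizePath : Measurable (normalizePath (l := l) (d := d)) :=
  measurable_pi_iff.2 fun t =>
    (measurable_pi_apply 0).norm.inv.smul (measurable_pi_apply t)

lemma normalizePath_smul {c : ℝ} (hc : 0 < c) (f : RPath l d) :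
    normalizePath (fun t => c • f t) = normalizePath f := by
  funext t
  simp only [normalizePath, norm_smul, Real.norm_eq_abs, abs_of_pos hc, smul_smul]
  congr 1
  field_simp

lemma norm_normalizePath_zero {f : RPath l d} (hf : ‖f 0‖ ≠ 0) : ‖normalizePath f 0‖ = 1 := by
  rw [normalizePath, norm_smul, norm_inv, norm_norm, inv_mul_cancel₀ hf]

lemma norm_normalizePath_apply (f : RPath l d) (t : Tsp l) :
    ‖normalizePath f t‖ = ‖f 0‖⁻¹ * ‖f t‖ := by
  rw [normalizePath, norm_smul, norm_inv, norm_norm]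

lemma Sfun_smul (α : ℝ) {c : ℝ} (hc : 0 ≤ c) (f : RPath l d) :
    Sfun α (fun t => c • f t) = ENNReal.ofReal (c ^ α) * Sfun α f := by
  rw [Sfun, Sfun, ← lintegral_const_mul' _ _ ENNReal.ofReal_ne_top]
  refine lintegral_congr fun t => ?_
  rw [norm_smul, Real.norm_eq_abs, abs_of_nonneg hc, Real.mul_rpow hc (norm_nonneg _),
    ENNReal.ofReal_mul (Real.rpow_nonneg hc _)]

lemma Hom.apply_smul_of_zero {Γ : RPath l d → ℝ≥0∞} (hΓ : Hom l d 0 Γ) {c : ℝ} (hc : 0 < c)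
    (f : RPath l d) : Γ (fun t => c • f t) = Γ f := by
  rw [hΓ.2 c hc f, Real.rpow_zero, ENNReal.ofReal_one, one_mul]

lemma Hom.mul_ofReal_norm_rpow {β : ℝ} {Γ : RPath l d → ℝ≥0∞} (hΓ : Hom l d β Γ) (γ : ℝ) :
    Hom l d (β + γ) fun f => Γ f * ENNReal.ofReal (‖f 0‖ ^ γ) := by
  refine ⟨hΓ.1.mul (by fun_prop), fun c hc f => ?_⟩
  dsimp only
  rw [hΓ.2 c hc f, norm_smul, Real.norm_eq_abs, abs_of_pos hc,
    Real.mul_rpow hc.le (norm_nonneg _), ENNReal.ofReal_mul (Real.rpow_nonneg hc.le _),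
    Real.rpow_add hc, ENNReal.ofReal_mul (Real.rpow_nonneg hc.le _)]
  ring

lemma hom_zero_ite_normalizePath_mem {C : Set (RPath l d)} [DecidablePred (· ∈ C)]
    (hC : MeasurableSet C) :
    Hom l d 0 fun f => if normalizePath f ∈ C then 1 else 0 :=
  ⟨Measurable.ite (measurable_normalizePath hC) measurable_const measurable_const,
    fun c hc f => by
      dsimp only
      rw [normalizePath_smul hc, Real.rpow_zero, ENNReal.ofReal_one, one_mul]⟩

lemma JointlyMeasurable.measurable_apply {Ω : Type*} [MeasurableSpace Ω] {Z : Ω → RPath l d}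
    (hZ : JointlyMeasurable Z) (t : Tsp l) : Measurable fun ω => Z ω t :=
  hZ.comp (measurable_id.prodMk measurable_const)

lemma JointlyMeasurable.measurable {Ω : Type*} [MeasurableSpace Ω] {Z : Ω → RPath l d}
    (hZ : JointlyMeasurable Z) : Measurable Z :=
  measurable_pi_iff.2 hZ.measurable_apply

lemma JointlyMeasurable.normalizePath {Ω : Type*} [MeasurableSpace Ω] {Z : Ω → RPath l d}
    (hZ : JointlyMeasurable Z) : JointlyMeasurable fun ω => normalizePath (Z ω) :=
  ((hZ.measurable_apply 0).norm.inv.comp measurable_fst).smul hZ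

end Paths

def TailIdentity {Ω : Type*} [MeasurableSpace Ω] (P : Measure Ω) {l d : ℕ} (α : ℝ)
    (Y : Ω → RPath l d) : Prop :=
  ∀ Γ : RPath l d → ℝ≥0∞, Measurable Γ → ∀ h : Tsp l, ∀ x : ℝ, 0 < x →
    (∫⁻ ω, Γ (fun t => x • shift h (Y ω) t) * (if 1 < x * ‖Y ω (-h)‖ then 1 else 0) ∂P) =
      ENNReal.ofReal (x ^ α) * ∫⁻ ω, Γ (Y ω) * (if x < ‖Y ω h‖ then 1 else 0) ∂P

namespace TailIdentity

variable {Ω : Type*} [MeasurableSpace Ω] {P : Measure Ω} {l d : ℕ} {α : ℝ}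
  {Y : Ω → RPath l d}

lemma homogeneous (hid : TailIdentity P α Y) {β : ℝ} {Γ : RPath l d → ℝ≥0∞}
    (hΓ : Hom l d β Γ) (h : Tsp l) {x : ℝ} (hx : 0 < x) :
    ENNReal.ofReal (x ^ β) *
        ∫⁻ ω, Γ (shift h (Y ω)) * (if 1 < x * ‖Y ω (-h)‖ then 1 else 0) ∂P =
      ENNReal.ofReal (x ^ α) * ∫⁻ ω, Γ (Y ω) * (if x < ‖Y ω h‖ then 1 else 0) ∂P := by
  rw [← hid Γ hΓ.1 h x hx, ← lintegral_const_mul' _ _ ENNReal.ofReal_ne_top]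
  refine lintegral_congr fun ω => ?_
  rw [hΓ.2 x hx, mul_assoc]

lemma measure_norm_gt_inter_normalizePath_preimage (hid : TailIdentity P α Y)
    (hYm : JointlyMeasurable Y) (h1 : ∀ᵐ ω ∂P, 1 < ‖Y ω 0‖) {s : ℝ} (hs : 1 ≤ s)
    {C : Set (RPath l d)} (hC : MeasurableSet C) :
    P ({ω | s < ‖Y ω 0‖} ∩ (fun ω => normalizePath (Y ω)) ⁻¹' C) =
      ENNReal.ofReal (s ^ (-α)) * P ((fun ω => normalizePath (Y ω)) ⁻¹' C) := by
  classical
  have hs0 : 0 < s := one_pos.trans_le hs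
  have hΘC : MeasurableSet ((fun ω => normalizePath (Y ω)) ⁻¹' C) :=
    (measurable_normalizePath.comp hYm.measurable) hC
  have hgt : MeasurableSet {ω | s < ‖Y ω 0‖} :=
    measurableSet_lt measurable_const (hYm.measurable_apply 0).norm
  have key := hid.homogeneous (hom_zero_ite_normalizePath_mem hC) 0 hs0
  have hlhs : ∫⁻ ω, (if normalizePath (shift 0 (Y ω)) ∈ C then 1 else 0) *
      (if 1 < s * ‖Y ω (-0)‖ then 1 else 0) ∂P = P ((fun ω => normalizePath (Y ω)) ⁻¹' C) := by
    refine (lintegral_congr_ae (h1.mono fun ω hω => ?_)).trans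
      (lintegral_ite_one_zero (q := fun ω => normalizePath (Y ω) ∈ C) hΘC)
    rw [shift_zero, neg_zero, if_pos (hω.trans_le (le_mul_of_one_le_left (norm_nonneg _) hs)),
      mul_one]
  have hrhs : ∫⁻ ω, (if normalizePath (Y ω) ∈ C then 1 else 0) *
      (if s < ‖Y ω 0‖ then 1 else 0) ∂P =
        P ({ω | s < ‖Y ω 0‖} ∩ (fun ω => normalizePath (Y ω)) ⁻¹' C) := by
    simp_rw [ite_zero_mul_ite_zero, mul_one]
    rw [lintegral_ite_one_zero (q := fun ω => normalizePath (Y ω) ∈ C ∧ s < ‖Y ω 0‖)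
      (hΘC.inter hgt), ofPred_and, inter_comm]
    rfl
  rw [Real.rpow_zero, ENNReal.ofReal_one, one_mul, hlhs, hrhs] at key
  rw [key, ← mul_assoc, ← ENNReal.ofReal_mul (by positivity), ← Real.rpow_add hs0,
    neg_add_cancel, Real.rpow_zero, ENNReal.ofReal_one, one_mul]

lemma measure_norm_gt [IsProbabilityMeasure P] (hid : TailIdentity P α Y)
    (hYm : JointlyMeasurable Y) (h1 : ∀ᵐ ω ∂P, 1 < ‖Y ω 0‖) {s : ℝ} (hs : 1 ≤ s) :
    P {ω | s < ‖Y ω 0‖} = ENNReal.ofReal (s ^ (-α)) := by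
  simpa using hid.measure_norm_gt_inter_normalizePath_preimage hYm h1 hs MeasurableSet.univ

lemma indepFun_norm_normalizePath [IsProbabilityMeasure P] (hid : TailIdentity P α Y)
    (hYm : JointlyMeasurable Y) (h1 : ∀ᵐ ω ∂P, 1 < ‖Y ω 0‖) :
    IndepFun (fun ω => ‖Y ω 0‖) (fun ω => normalizePath (Y ω)) P := by
  refine indepFun_of_measure_preimage_Ioi_inter (hYm.measurable_apply 0).norm
    (measurable_normalizePath.comp hYm.measurable) fun s C hC => ?_
  change P ({ω | s < ‖Y ω 0‖} ∩ _) = P {ω | s < ‖Y ω 0‖} * _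
  rcases le_or_gt 1 s with hs | hs
  · rw [hid.measure_norm_gt_inter_normalizePath_preimage hYm h1 hs hC,
      hid.measure_norm_gt hYm h1 hs]
  · have hconull : {ω | s < ‖Y ω 0‖} =ᵐ[P] univ :=
      eventuallyEq_univ.2 (h1.mono fun ω hω => hs.trans hω)
    rw [measure_congr (inter_ae_eq_right_of_ae_eq_univ hconull), measure_congr hconull,
      measure_univ, one_mul]

lemma lintegral_shift_mul_ite_ne_zero [SFinite P] (hid : TailIdentity P α Y) (hα : 0 < α)
    (hYm : JointlyMeasurable Y) {Γ : RPath l d → ℝ≥0∞} (hΓ : Hom l d 0 Γ) (h : Tsp l) :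
    ∫⁻ ω, Γ (shift h (Y ω)) * (if ‖Y ω (-h)‖ ≠ 0 then 1 else 0) ∂P =
      ∫⁻ ω, Γ (Y ω) * ENNReal.ofReal (‖Y ω 0‖ ^ (-α)) * ENNReal.ofReal (‖Y ω h‖ ^ α) ∂P := by
  have hΓα := hΓ.mul_ofReal_norm_rpow (-α)
  rw [zero_add] at hΓα
  have key := lintegral_mul_rpow_eq_of_balance hα
    (hΓα.1.comp ((measurable_shift h).comp hYm.measurable)) (hΓα.1.comp hYm.measurable)
    (hYm.measurable_apply (-h)).norm (hYm.measurable_apply h).norm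
    (fun _ => norm_nonneg _) (fun _ => norm_nonneg _) fun x hx => hid.homogeneous hΓα h hx
  simp only [Function.comp_apply, shift_apply_zero] at key
  rw [← key]
  refine lintegral_congr fun ω => ?_
  rw [mul_assoc, ofReal_rpow_neg_mul_ofReal_rpow (norm_nonneg _) hα.ne']

lemma spectralTail_normalizePath [IsProbabilityMeasure P] (hid : TailIdentity P α Y)
    (hα : 0 < α) (hYm : JointlyMeasurable Y) (h1 : ∀ᵐ ω ∂P, 1 < ‖Y ω 0‖)
    (hS : P {ω | 0 < Sfun α (Y ω)} = 1) :
    SpectralTail P α fun ω => normalizePath (Y ω) := by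
  have hpos : ∀ᵐ ω ∂P, 0 < ‖Y ω 0‖ := h1.mono fun ω hω => one_pos.trans hω
  refine ⟨hYm.normalizePath, ?_, ?_, fun Γ hΓ h => ?_⟩
  · exact measure_eq_one_of_ae_imp measure_univ
      (hpos.mono fun ω hω _ => norm_normalizePath_zero hω.ne')
  · refine measure_eq_one_of_ae_imp hS (hpos.mono fun ω hω (hSω : 0 < Sfun α (Y ω)) => ?_)
    change 0 < Sfun α fun t => ‖Y ω 0‖⁻¹ • Y ω t
    rw [Sfun_smul α (inv_nonneg.2 (norm_nonneg _))]
    exact ENNReal.mul_pos (ENNReal.ofReal_pos.2 (Real.rpow_pos_of_pos (inv_pos.2 hω) α)).ne'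
      hSω.ne'
  calc ∫⁻ ω, ENNReal.ofReal (‖normalizePath (Y ω) h‖ ^ α) * Γ (normalizePath (Y ω)) ∂P
      = ∫⁻ ω, Γ (Y ω) * ENNReal.ofReal (‖Y ω 0‖ ^ (-α)) * ENNReal.ofReal (‖Y ω h‖ ^ α) ∂P := by
        refine lintegral_congr_ae (hpos.mono fun ω hω => ?_)
        have hΓΘ : Γ (normalizePath (Y ω)) = Γ (Y ω) := hΓ.apply_smul_of_zero (inv_pos.2 hω) _
        dsimp only
        rw [hΓΘ, norm_normalizePath_apply, Real.mul_rpow (inv_nonneg.2 hω.le) (norm_nonneg _),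
          Real.inv_rpow hω.le, ← Real.rpow_neg hω.le,
          ENNReal.ofReal_mul (Real.rpow_nonneg hω.le _)]
        ring
    _ = ∫⁻ ω, Γ (shift h (Y ω)) * (if ‖Y ω (-h)‖ ≠ 0 then 1 else 0) ∂P :=
        (hid.lintegral_shift_mul_ite_ne_zero hα hYm hΓ h).symm
    _ = ∫⁻ ω, (if ‖normalizePath (Y ω) (-h)‖ ≠ 0 then 1 else 0) *
          Γ (shift h (normalizePath (Y ω))) ∂P := by
        refine lintegral_congr_ae (hpos.mono fun ω hω => ?_)
        have hΓΘ : Γ (shift h (normalizePath (Y ω))) = Γ (shift h (Y ω)) :=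
          hΓ.apply_smul_of_zero (inv_pos.2 hω) _
        dsimp only
        rw [hΓΘ, norm_normalizePath_apply, mul_comm]
        simp [hω.ne']

end TailIdentity

theorem stmt16_general {Ω : Type*} [MeasurableSpace Ω] (P : Measure Ω)
    [IsProbabilityMeasure P]
    {l d : ℕ} (α : ℝ) (hα : 0 < α)
    (Y : Ω → RPath l d) (hYm : JointlyMeasurable Y)
    (h0 : P {ω | 1 < ‖Y ω 0‖} = 1)
    (hS : P {ω | 0 < Sfun α (Y ω)} = 1)
    (hid : ∀ Γ : RPath l d → ℝ≥0∞, Measurable Γ → ∀ h : Tsp l, ∀ x : ℝ, 0 < x →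
      (∫⁻ ω, Γ (fun t => x • shift h (Y ω) t) *
          (if 1 < x * ‖Y ω (-h)‖ then 1 else 0) ∂P) =
      ENNReal.ofReal (x ^ α) *
        ∫⁻ ω, Γ (Y ω) * (if x < ‖Y ω h‖ then 1 else 0) ∂P)
    (Θ : Ω → RPath l d) (hΘdef : Θ = fun ω t => ‖Y ω 0‖⁻¹ • Y ω t) :
    (∀ s : ℝ, 1 ≤ s → P {ω | s < ‖Y ω 0‖} = ENNReal.ofReal (s ^ (-α))) ∧
    IndepFun (fun ω => ‖Y ω 0‖) Θ P ∧
    SpectralTail P α Θ := by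
  subst hΘdef
  have hid : TailIdentity P α Y := hid
  have h1 : ∀ᵐ ω ∂P, 1 < ‖Y ω 0‖ :=
    (ae_iff_measure_eq (measurableSet_lt measurable_const
      (hYm.measurable_apply 0).norm).nullMeasurableSet).2 (h0.trans measure_univ.symm)
  exact ⟨fun s hs => hid.measure_norm_gt hYm h1 hs, hid.indepFun_norm_normalizePath hYm h1,
    hid.spectralTail_normalizePath hα hYm h1 hS⟩

/-- if `Y` satisfies the tail identity with `‖Y(0)‖ > 1` a.s. and
`S(Y) > 0` a.s., then `‖Y(0)‖` is α-Pareto, independent of `Θ = Y/‖Y(0)‖`, and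
`Θ` is a spectral tail RF. -/
theorem stmt16 {Ω : Type*} [MeasurableSpace Ω] (P : Measure Ω)
    [IsProbabilityMeasure P] (hPc : P.IsComplete)
    {l d : ℕ} (hl : 1 ≤ l) (hd : 1 ≤ d) (α : ℝ) (hα : 0 < α)
    (Y : Ω → RPath l d) (hYm : JointlyMeasurable Y)
    (h0 : P {ω | 1 < ‖Y ω 0‖} = 1)
    (hS : P {ω | 0 < Sfun α (Y ω)} = 1)
    (hid : ∀ Γ : RPath l d → ℝ≥0∞, Measurable Γ → ∀ h : Tsp l, ∀ x : ℝ, 0 < x →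
      (∫⁻ ω, Γ (fun t => x • shift h (Y ω) t) *
          (if 1 < x * ‖Y ω (-h)‖ then 1 else 0) ∂P) =
      ENNReal.ofReal (x ^ α) *
        ∫⁻ ω, Γ (Y ω) * (if x < ‖Y ω h‖ then 1 else 0) ∂P)
    (Θ : Ω → RPath l d) (hΘdef : Θ = fun ω t => ‖Y ω 0‖⁻¹ • Y ω t) :
    (∀ s : ℝ, 1 ≤ s → P {ω | s < ‖Y ω 0‖} = ENNReal.ofReal (s ^ (-α))) ∧
    IndepFun (fun ω => ‖Y ω 0‖) Θ P ∧
    SpectralTail P α Θ :=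
  stmt16_general P α hα Y hYm h0 hS hid Θ hΘdef
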